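/- arXiv:2602.21020 — 4 statements merged into one kernel-verified Lean document; each statement's English description precedes it below -/
import Mathlib

section
/- In a Markov Game, if the expert policy π^E has full-state support (every state has positive occupancy under π^E) and a learned product policy π satisfies ρ_π = ρ_{π^E}, then π = π^E as functions on S, and consequently NashGap(π) = 0. -/
open scoped BigOperators

namespace MAIL

/-- An `n`-player Markov Game with finite state space `S` and finite
per-player action spaces `A i` (joint actions are dependent functions). -/
structure Game (n : ℕ) (S : Type) (A : Fin n → Type) [Fintype S] [∀ i, Fintype (A i)] where
  P : S → (∀ i, A i) → S → ℝ
  r : Fin n → S → (∀ i, A i) → ℝ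
  ν₀ : S → ℝ
  γ : ℝ

variable {n : ℕ} {S : Type} {A : Fin n → Type} [Fintype S] [∀ i, Fintype (A i)]

/-- A (per-player or joint) policy is a probability distribution over actions at each state. -/
def IsPol {B : Type} [Fintype B] (π : S → B → ℝ) : Prop :=
  (∀ s b, 0 ≤ π s b) ∧ ∀ s, ∑ b, π s b = 1

/-- Standard validity assumptions on a game: `γ ∈ [0,1)`, `ν₀` a distribution,
`P` a transition kernel, rewards bounded in `[-1,1]`. -/
def IsGame (G : Game n S A) : Prop :=
  0 ≤ G.γ ∧ G.γ < 1 ∧ (∀ s, 0 ≤ G.ν₀ s) ∧ (∑ s, G.ν₀ s = 1) ∧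
    (∀ s a, (∀ s', 0 ≤ G.P s a s') ∧ ∑ s', G.P s a s' = 1) ∧
    (∀ i s a, |G.r i s a| ≤ 1)

/-- Joint (product) policy induced by independent per-player policies. -/
def joint (π : ∀ i, S → A i → ℝ) : S → (∀ i, A i) → ℝ :=
  fun s a => ∏ i, π i s (a i)

/-- `stateDist G π t s = P(s_t = s)` when rolling out joint policy `π`. -/
def stateDist (G : Game n S A) (π : S → (∀ i, A i) → ℝ) : ℕ → S → ℝ
  | 0 => G.ν₀
  | t + 1 => fun s' => ∑ s : S, ∑ a : (∀ i, A i), stateDist G π t s * π s a * G.P s a s'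

/-- Discounted state occupancy measure `μ_π(s) = (1-γ) ∑_t γ^t P(s_t = s)`. -/
noncomputable def occ (G : Game n S A) (π : S → (∀ i, A i) → ℝ) (s : S) : ℝ :=
  (1 - G.γ) * ∑' t : ℕ, G.γ ^ t * stateDist G π t s

/-- State-action occupancy measure `ρ_π(s,a) = μ_π(s) π(a|s)`. -/
noncomputable def saOcc (G : Game n S A) (π : S → (∀ i, A i) → ℝ)
    (s : S) (a : ∀ i, A i) : ℝ :=
  occ G π s * π s a

/-- Player `i`'s value `V_i^π(ν₀) = (1/(1-γ)) E_{(s,a)∼ρ_π}[r_i(s,a)]`. -/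
noncomputable def value (G : Game n S A) (i : Fin n) (π : S → (∀ i, A i) → ℝ) : ℝ :=
  (1 / (1 - G.γ)) * ∑ s : S, ∑ a : (∀ i, A i), saOcc G π s a * G.r i s a

/-- Player `i`'s value started from the Dirac distribution at state `s`. -/
noncomputable def valueFrom [DecidableEq S] (G : Game n S A) (i : Fin n)
    (π : S → (∀ i, A i) → ℝ) (s₀ : S) : ℝ :=
  value { G with ν₀ := fun s => if s = s₀ then 1 else 0 } i π

/-- State-action value `Q_i^π(s,a) = r_i(s,a) + γ ∑_{s'} P(s'|s,a) V_i^π(s')`. -/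
noncomputable def Qf [DecidableEq S] (G : Game n S A) (i : Fin n)
    (π : S → (∀ i, A i) → ℝ) (s : S) (a : ∀ i, A i) : ℝ :=
  G.r i s a + G.γ * ∑ s' : S, G.P s a s' * valueFrom G i π s'

/-- Unilateral deviation: player `i` switches to `πi'`, the others keep `π`. -/
def dev (π : ∀ i, S → A i → ℝ) (i : Fin n) (πi' : S → A i → ℝ) :
    ∀ j, S → A j → ℝ :=
  Function.update π i πi'

/-- Behavioral-cloning error of player `i`:
`E_{s ∼ μ_{π^E}} ‖π_i(·|s) − π^E_i(·|s)‖₁`. -/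
noncomputable def bcErr (G : Game n S A) (πE π : ∀ i, S → A i → ℝ) (i : Fin n) : ℝ :=
  ∑ s : S, occ G (joint πE) s * ∑ b : A i, |π i s b - πE i s b|

end MAIL

namespace MAIL

lemma joint_sum_one {n : ℕ} {S : Type} {A : Fin n → Type}
    [Fintype S] [∀ i, Fintype (A i)]
    (π : ∀ i, S → A i → ℝ) (hpol : ∀ i, IsPol (π i)) (s : S) :
    ∑ a : (∀ i, A i), joint π s a = 1 := by
  have := Finset.prod_univ_sum (fun _ : Fin n => (Finset.univ : Finset _)) (fun i b => π i s b)
  rw [Fintype.piFinset_univ] at this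
  simp only [joint]
  rw [← this]
  simp [(hpol _).2 s]

open Classical in
lemma marginal_eq {n : ℕ} {S : Type} {A : Fin n → Type}
    [Fintype S] [∀ i, Fintype (A i)]
    (π : ∀ i, S → A i → ℝ) (hpol : ∀ i, IsPol (π i)) (i : Fin n) (s : S) (b₀ : A i) :
    π i s b₀ = ∑ a : (∀ j, A j), if a i = b₀ then joint π s a else 0 := by
  classical
  set g : ∀ j, A j → ℝ :=
    Function.update (fun j => π j s) i (fun b => if b = b₀ then π i s b₀ else 0) with hg
  have key : ∑ a : (∀ j, A j), ∏ j, g j (a j) = ∏ j, ∑ b, g j b := by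
    have := Finset.prod_univ_sum (fun _ : Fin n => (Finset.univ : Finset _)) (fun j b => g j b)
    rw [Fintype.piFinset_univ] at this
    exact this.symm
  have hrhs : ∏ j, ∑ b, g j b = π i s b₀ := by
    rw [Finset.prod_eq_single i]
    · simp [hg]
    · intro j _ hj
      simp [hg, Function.update_of_ne hj, (hpol j).2 s]
    · simp
  have hlhs : ∀ a : (∀ j, A j),
      (∏ j, g j (a j)) = if a i = b₀ then joint π s a else 0 := by
    intro a
    by_cases h : a i = b₀
    · simp only [if_pos h, joint]
      apply Finset.prod_congr rfl
      intro j _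
      by_cases hj : j = i
      · subst hj; simp [hg, h]
      · simp [hg, Function.update_of_ne hj]
    · rw [if_neg h]
      apply Finset.prod_eq_zero (Finset.mem_univ i)
      simp [hg, h]
  calc π i s b₀ = ∏ j, ∑ b, g j b := hrhs.symm
    _ = ∑ a : (∀ j, A j), ∏ j, g j (a j) := key.symm
    _ = ∑ a : (∀ j, A j), if a i = b₀ then joint π s a else 0 := by
        exact Finset.sum_congr rfl fun a _ => hlhs a

/-- if the expert Nash equilibrium `π^E` has full-state support and
the learned product policy `π` matches its state-action occupancy measure
exactly, then `π = π^E` (as joint policies on `S`) and `NashGap(π) = 0`,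
i.e. `π` is itself a Nash equilibrium. -/
theorem exact_matching_full_support_nash {n : ℕ} {S : Type} {A : Fin n → Type}
    [Fintype S] [∀ i, Fintype (A i)]
    (G : Game n S A) (hG : IsGame G)
    (πE π : ∀ i, S → A i → ℝ)
    (hE : ∀ i, IsPol (πE i)) (hπ : ∀ i, IsPol (π i))
    (hNash : ∀ i (πi' : S → A i → ℝ), IsPol πi' →
      value G i (joint (dev πE i πi')) ≤ value G i (joint πE))
    (hsupp : ∀ s, 0 < occ G (joint πE) s)
    (hρ : ∀ s a, saOcc G (joint π) s a = saOcc G (joint πE) s a) :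
    (∀ s a, joint π s a = joint πE s a) ∧
    (∀ i (πi' : S → A i → ℝ), IsPol πi' →
      value G i (joint (dev π i πi')) ≤ value G i (joint π)) := by
  classical
  have hocc : ∀ s, occ G (joint π) s = occ G (joint πE) s := by
    intro s
    have h1 : occ G (joint π) s = ∑ a : (∀ i, A i), saOcc G (joint π) s a := by
      simp [saOcc, ← Finset.mul_sum, joint_sum_one π hπ s]
    have h2 : occ G (joint πE) s = ∑ a : (∀ i, A i), saOcc G (joint πE) s a := by
      simp [saOcc, ← Finset.mul_sum, joint_sum_one πE hE s]
    rw [h1, h2]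
    exact Finset.sum_congr rfl fun a _ => hρ s a
  have hjoint : ∀ s a, joint π s a = joint πE s a := by
    intro s a
    have h := hρ s a
    simp only [saOcc, hocc s] at h
    exact mul_left_cancel₀ (ne_of_gt (hsupp s)) h
  have hpe : π = πE := by
    funext j s b
    rw [marginal_eq π hπ j s b, marginal_eq πE hE j s b]
    exact Finset.sum_congr rfl fun a _ => by rw [hjoint]
  refine ⟨hjoint, ?_⟩
  intro i πi' hπi'
  rw [hpe]
  exact hNash i πi' hπi'

end MAIL
end

section
/- There exists a two-player cooperative Markov Game G with a full-support Nash equilibrium π^E and a product policy π such that μ_π = μ_{π^E} (state-only occupancy measures match exactly) but NashGap(π) ≥ (5/3)/(1−γ). Concretely: in the 3-state cyclic game where joint action (a₁,a₁) advances the cycle s₀→s₁→s₂→s₀ with rewards 1/3, 2/3, 1 respectively and all other joint actions self-loop with reward −1 for both players, with uniform initial distribution, the constant policies π^E playing (a₁,a₁) everywhere and π playing (a₁,a₂) everywhere satisfy μ_π = μ_{π^E} and V₂^{π^E}(ν_U) − V₂^π(ν_U) = (5/3)/(1−γ). -/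
open scoped BigOperators

namespace MAIL

/-- The 3-state cyclic cooperative two-player game of Figure 1: joint action
`(a₁,a₁)` (encoded as both players playing `0`) advances the cycle
`s₀ → s₁ → s₂ → s₀` with common rewards `1/3, 2/3, 1`; any other joint action
self-loops with common reward `-1`. Uniform initial distribution. -/
noncomputable def cyclicGame (γ : ℝ) : Game 2 (Fin 3) (fun _ => Fin 2) where
  P := fun s a s' =>
    if a 0 = 0 ∧ a 1 = 0 then (if s' = s + 1 then (1 : ℝ) else 0)
    else (if s' = s then 1 else 0)
  r := fun _ s a =>
    if a 0 = 0 ∧ a 1 = 0 then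
      (if s = 0 then (1 : ℝ) / 3 else if s = 1 then 2 / 3 else 1)
    else -1
  ν₀ := fun _ => 1 / 3
  γ := γ

/-- Expert product policy: both players constantly play `a₁` (= `0`). -/
def cyclicExpert : ∀ _ : Fin 2, Fin 3 → Fin 2 → ℝ :=
  fun _ _ a => if a = 0 then 1 else 0

/-- Learned product policy: player 1 plays `a₁` (= `0`), player 2 plays `a₂` (= `1`). -/
def cyclicLearner : ∀ i : Fin 2, Fin 3 → Fin 2 → ℝ :=
  fun i _ a => if a = (if i = 0 then (0 : Fin 2) else 1) then 1 else 0

section Aux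

lemma sum_pi2 (f : (Fin 2 → Fin 2) → ℝ) :
    ∑ a : Fin 2 → Fin 2, f a = f ![0,0] + f ![0,1] + f ![1,0] + f ![1,1] := by
  rw [← (piFinTwoEquiv fun _ => Fin 2).symm.sum_comp f]
  rw [Fintype.sum_prod_type]
  simp only [Fin.sum_univ_two, piFinTwoEquiv, Equiv.coe_fn_symm_mk]
  have h : ∀ x y : Fin 2, (Fin.cons x (Fin.cons y finZeroElim) : Fin 2 → Fin 2) = ![x,y] := by
    intro x y; funext i; fin_cases i <;> rfl
  rw [h,h,h,h]; ring

lemma sum_ind (c : Fin 3) (g : Fin 3 → ℝ) :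
    ∑ s' : Fin 3, (if s' = c then (1:ℝ) else 0) * g s' = g c := by
  simp

/-- The optimal value function of the cyclic game. -/
noncomputable def Vf (γ : ℝ) : Fin 3 → ℝ := fun s =>
  if s = 0 then (1/3 + 2/3*γ + γ^2)/(1-γ^3)
  else if s = 1 then (2/3 + γ + 1/3*γ^2)/(1-γ^3)
  else (1 + 1/3*γ + 2/3*γ^2)/(1-γ^3)

lemma den_pos {γ : ℝ} (h0 : 0 ≤ γ) (h1 : γ < 1) : 0 < 1 - γ^3 := by
  nlinarith [pow_lt_one₀ h0 h1 (three_ne_zero)]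

lemma Vf_nonneg {γ : ℝ} (h0 : 0 ≤ γ) (h1 : γ < 1) (s : Fin 3) : 0 ≤ Vf γ s := by
  have hd := den_pos h0 h1
  fin_cases s <;> simp [Vf] <;> positivity

lemma Vf_bellman {γ : ℝ} (h0 : 0 ≤ γ) (h1 : γ < 1) (s : Fin 3) :
    (if s = 0 then (1:ℝ)/3 else if s = 1 then 2/3 else 1) + γ * Vf γ (s+1) = Vf γ s := by
  have hd := (den_pos h0 h1).ne'
  fin_cases s <;> simp [Vf] <;> field_simp <;> ring

lemma Vf_sum {γ : ℝ} (h0 : 0 ≤ γ) (h1 : γ < 1) :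
    Vf γ 0 + Vf γ 1 + Vf γ 2 = 2/(1-γ) := by
  have hd := (den_pos h0 h1).ne'
  have h1' : (1:ℝ) - γ ≠ 0 := by nlinarith
  have h1' : (1:ℝ) - γ ≠ 0 := by nlinarith
  simp [Vf]
  field_simp
  ring

end Aux

section Aux2

variable {γ : ℝ}

lemma expert_isPol (i : Fin 2) : IsPol (cyclicExpert i) := by
  constructor
  · intro s b; unfold cyclicExpert; split <;> norm_num
  · intro s; simp [cyclicExpert, Fin.sum_univ_two]

lemma learner_isPol (i : Fin 2) : IsPol (cyclicLearner i) := by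
  constructor
  · intro s b; unfold cyclicLearner; split <;> split <;> norm_num
  · intro s; fin_cases i <;> simp [cyclicLearner, Fin.sum_univ_two]

lemma joint_expert (s : Fin 3) (a : Fin 2 → Fin 2) :
    joint cyclicExpert s a = if a 0 = 0 ∧ a 1 = 0 then 1 else 0 := by
  simp only [joint, cyclicExpert, Fin.prod_univ_two]
  by_cases h0 : a 0 = 0 <;> by_cases h1 : a 1 = 0 <;> simp [h0, h1]

lemma joint_learner (s : Fin 3) (a : Fin 2 → Fin 2) :
    joint cyclicLearner s a = if a 0 = 0 ∧ a 1 = 1 then 1 else 0 := by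
  simp only [joint, cyclicLearner, Fin.prod_univ_two]
  norm_num
  by_cases h0 : a 0 = 0 <;> by_cases h1 : a 1 = 1 <;> simp [h0, h1]

lemma stateDist_expert (t : ℕ) : ∀ s, stateDist (cyclicGame γ) (joint cyclicExpert) t s = 1/3 := by
  induction t with
  | zero => intro s; rfl
  | succ t ih =>
    intro s'
    show (∑ s : Fin 3, ∑ a : Fin 2 → Fin 2,
      stateDist (cyclicGame γ) (joint cyclicExpert) t s * joint cyclicExpert s a *
        (cyclicGame γ).P s a s') = 1/3
    have hrow : ∀ s : Fin 3, (∑ a : Fin 2 → Fin 2,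
        stateDist (cyclicGame γ) (joint cyclicExpert) t s * joint cyclicExpert s a *
          (cyclicGame γ).P s a s') = 1/3 * (if s' = s + 1 then 1 else 0) := by
      intro s
      rw [sum_pi2]
      simp only [ih]
      simp [joint_expert, cyclicGame]
    rw [Finset.sum_congr rfl fun s _ => hrow s]
    fin_cases s' <;> simp [Fin.sum_univ_three] <;> norm_num

lemma stateDist_learner (t : ℕ) : ∀ s, stateDist (cyclicGame γ) (joint cyclicLearner) t s = 1/3 := by
  induction t with
  | zero => intro s; rfl
  | succ t ih =>
    intro s'
    show (∑ s : Fin 3, ∑ a : Fin 2 → Fin 2,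
      stateDist (cyclicGame γ) (joint cyclicLearner) t s * joint cyclicLearner s a *
        (cyclicGame γ).P s a s') = 1/3
    have hrow : ∀ s : Fin 3, (∑ a : Fin 2 → Fin 2,
        stateDist (cyclicGame γ) (joint cyclicLearner) t s * joint cyclicLearner s a *
          (cyclicGame γ).P s a s') = 1/3 * (if s' = s then 1 else 0) := by
      intro s
      rw [sum_pi2]
      simp only [ih]
      simp [joint_learner, cyclicGame]
    rw [Finset.sum_congr rfl fun s _ => hrow s]
    fin_cases s' <;> simp [Fin.sum_univ_three]

lemma occ_of_uniform (h0 : 0 ≤ γ) (h1 : γ < 1) (π : Fin 3 → (Fin 2 → Fin 2) → ℝ)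
    (hu : ∀ t s, stateDist (cyclicGame γ) π t s = 1/3) (s : Fin 3) :
    occ (cyclicGame γ) π s = 1/3 := by
  unfold occ
  have : ∀ t : ℕ, (cyclicGame γ).γ ^ t * stateDist (cyclicGame γ) π t s = γ ^ t * (1/3) := by
    intro t; rw [hu t s]; rfl
  rw [tsum_congr this, tsum_mul_right, tsum_geometric_of_lt_one h0 h1]
  show (1 - γ) * ((1-γ)⁻¹ * (1/3)) = 1/3
  have hne : (1:ℝ) - γ ≠ 0 := by nlinarith
  field_simp

lemma occ_expert (h0 : 0 ≤ γ) (h1 : γ < 1) (s : Fin 3) :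
    occ (cyclicGame γ) (joint cyclicExpert) s = 1/3 :=
  occ_of_uniform h0 h1 _ (fun t => stateDist_expert t) s

lemma occ_learner (h0 : 0 ≤ γ) (h1 : γ < 1) (s : Fin 3) :
    occ (cyclicGame γ) (joint cyclicLearner) s = 1/3 :=
  occ_of_uniform h0 h1 _ (fun t => stateDist_learner t) s

lemma value_expert (h0 : 0 ≤ γ) (h1 : γ < 1) (i : Fin 2) :
    value (cyclicGame γ) i (joint cyclicExpert) = (2/3)/(1-γ) := by
  unfold value saOcc
  have hcal : ∀ s : Fin 3, (∑ a : Fin 2 → Fin 2,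
      occ (cyclicGame γ) (joint cyclicExpert) s * joint cyclicExpert s a * (cyclicGame γ).r i s a)
      = 1/3 * (if s = 0 then (1:ℝ)/3 else if s = 1 then 2/3 else 1) := by
    intro s
    rw [sum_pi2]
    simp only [occ_expert h0 h1]
    simp [joint_expert, cyclicGame]
  rw [Finset.sum_congr rfl fun s _ => hcal s]
  show (1/(1-γ)) * _ = _
  rw [Fin.sum_univ_three]
  simp
  ring

lemma value_learner (h0 : 0 ≤ γ) (h1 : γ < 1) (i : Fin 2) :
    value (cyclicGame γ) i (joint cyclicLearner) = -1/(1-γ) := by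
  unfold value saOcc
  have hcal : ∀ s : Fin 3, (∑ a : Fin 2 → Fin 2,
      occ (cyclicGame γ) (joint cyclicLearner) s * joint cyclicLearner s a * (cyclicGame γ).r i s a)
      = 1/3 * (-1) := by
    intro s
    rw [sum_pi2]
    simp only [occ_learner h0 h1]
    simp [joint_learner, cyclicGame]
  rw [Finset.sum_congr rfl fun s _ => hcal s]
  rw [Fin.sum_univ_three]
  show (1/(1-γ)) * _ = _
  ring

end Aux2

section Aux3

variable {γ : ℝ}

lemma cyclicP_nonneg (s : Fin 3) (a : Fin 2 → Fin 2) (s' : Fin 3) :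
    0 ≤ (cyclicGame γ).P s a s' := by
  show (0:ℝ) ≤ if a 0 = 0 ∧ a 1 = 0 then (if s' = s + 1 then (1:ℝ) else 0) else (if s' = s then 1 else 0)
  split <;> split <;> norm_num

lemma cyclicP_sum (s : Fin 3) (a : Fin 2 → Fin 2) :
    ∑ s', (cyclicGame γ).P s a s' = 1 := by
  show (∑ s' : Fin 3, if a 0 = 0 ∧ a 1 = 0 then (if s' = s + 1 then (1:ℝ) else 0) else (if s' = s then 1 else 0)) = 1
  by_cases h : a 0 = 0 ∧ a 1 = 0 <;> simp [h]

lemma cyclicR_abs (i : Fin 2) (s : Fin 3) (a : Fin 2 → Fin 2) :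
    |(cyclicGame γ).r i s a| ≤ 1 := by
  show |if a 0 = 0 ∧ a 1 = 0 then (if s = 0 then (1:ℝ)/3 else if s = 1 then 2/3 else 1) else -1| ≤ 1
  split
  · split
    · rw [abs_of_nonneg] <;> norm_num
    · split
      · rw [abs_of_nonneg] <;> norm_num
      · rw [abs_of_nonneg] <;> norm_num
  · rw [abs_of_nonpos] <;> norm_num

/-- Key lemma: any joint policy satisfying the Bellman inequality w.r.t. `Vf`
has value at most `(2/3)/(1-γ)` in the cyclic game. -/
lemma value_le_of_bellman (h0 : 0 < γ) (h1 : γ < 1) (i : Fin 2)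
    (π : Fin 3 → (Fin 2 → Fin 2) → ℝ)
    (hpos : ∀ s a, 0 ≤ π s a) (hsum : ∀ s, ∑ a, π s a = 1)
    (hbell : ∀ s : Fin 3, ∑ a, π s a *
        ((cyclicGame γ).r i s a + γ * ∑ s', (cyclicGame γ).P s a s' * Vf γ s') ≤ Vf γ s) :
    value (cyclicGame γ) i π ≤ (2/3)/(1-γ) := by
  have hγle := h0.le
  have hne : (1:ℝ) - γ ≠ 0 := by nlinarith
  set d := stateDist (cyclicGame γ) π with hd
  set R := (cyclicGame γ).r i with hR
  set Pm := (cyclicGame γ).P with hPm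
  set V := Vf γ with hV
  -- basic state-distribution facts
  have hd0 : ∀ t s, 0 ≤ d t s := by
    intro t
    induction t with
    | zero => intro s; show (0:ℝ) ≤ 1/3; norm_num
    | succ t ih =>
      intro s'
      apply Finset.sum_nonneg; intro s _
      apply Finset.sum_nonneg; intro a _
      exact mul_nonneg (mul_nonneg (ih s) (hpos s a)) (cyclicP_nonneg s a s')
  have hd1 : ∀ t, ∑ s, d t s = 1 := by
    intro t
    induction t with
    | zero => show (∑ _s : Fin 3, (1:ℝ)/3) = 1; simp [Fin.sum_univ_three]
    | succ t ih =>
      show (∑ s' : Fin 3, ∑ s : Fin 3, ∑ a : Fin 2 → Fin 2, d t s * π s a * Pm s a s') = 1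
      rw [Finset.sum_comm]
      have hrow : ∀ s : Fin 3, (∑ s' : Fin 3, ∑ a : Fin 2 → Fin 2, d t s * π s a * Pm s a s') = d t s := by
        intro s
        rw [Finset.sum_comm]
        have : ∀ a : Fin 2 → Fin 2, (∑ s' : Fin 3, d t s * π s a * Pm s a s') = d t s * π s a := by
          intro a
          rw [← Finset.mul_sum, cyclicP_sum s a, mul_one]
        rw [Finset.sum_congr rfl fun a _ => this a, ← Finset.mul_sum, hsum s, mul_one]
      rw [Finset.sum_congr rfl fun s _ => hrow s, ih]
  have hdle : ∀ t s, d t s ≤ 1 := by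
    intro t s
    calc d t s ≤ ∑ s', d t s' := Finset.single_le_sum (fun s' _ => hd0 t s') (Finset.mem_univ s)
    _ = 1 := hd1 t
  -- expected reward and potential
  set E : ℕ → ℝ := fun t => ∑ s, ∑ a, d t s * π s a * R s a with hE
  set Φ : ℕ → ℝ := fun t => ∑ s, d t s * V s with hΦ
  have hΦ0 : ∀ t, 0 ≤ Φ t := by
    intro t
    apply Finset.sum_nonneg; intro s _
    exact mul_nonneg (hd0 t s) (Vf_nonneg hγle h1 s)
  -- telescoping step
  have hstep : ∀ t, E t + γ * Φ (t+1) ≤ Φ t := by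
    intro t
    have hexp : E t + γ * Φ (t+1) =
        ∑ s, d t s * ∑ a, π s a * (R s a + γ * ∑ s', Pm s a s' * V s') := by
      have h2 : γ * Φ (t+1) = ∑ s, ∑ a, ∑ s', γ * (d t s * π s a * Pm s a s' * V s') := by
        show γ * (∑ s' : Fin 3, (∑ s : Fin 3, ∑ a : Fin 2 → Fin 2, d t s * π s a * Pm s a s') * V s') = _
        simp only [Fin.sum_univ_three, sum_pi2]
        ring
      rw [h2, hE]
      rw [← Finset.sum_add_distrib]
      refine Finset.sum_congr rfl fun s _ => ?_
      rw [Finset.mul_sum, ← Finset.sum_add_distrib]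
      refine Finset.sum_congr rfl fun a _ => ?_
      simp only [Fin.sum_univ_three]
      ring
    rw [hexp]
    calc ∑ s, d t s * ∑ a, π s a * (R s a + γ * ∑ s', Pm s a s' * V s')
        ≤ ∑ s, d t s * V s :=
          Finset.sum_le_sum fun s _ => mul_le_mul_of_nonneg_left (hbell s) (hd0 t s)
      _ = Φ t := rfl
  -- partial sums are bounded by Φ 0
  have hpartial : ∀ T, ∑ t ∈ Finset.range T, γ^t * E t ≤ Φ 0 - γ^T * Φ T := by
    intro T
    induction T with
    | zero => simp
    | succ T ih =>
      rw [Finset.sum_range_succ]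
      have h3 : γ^T * E T ≤ γ^T * (Φ T - γ * Φ (T+1)) :=
        mul_le_mul_of_nonneg_left (by linarith [hstep T]) (pow_nonneg hγle T)
      have : γ^(T+1) * Φ (T+1) = γ^T * (γ * Φ (T+1)) := by ring
      nlinarith [pow_nonneg hγle T]
  -- |E t| ≤ 1 and summability
  have hEb : ∀ t, |E t| ≤ 1 := by
    intro t
    have habs : |E t| ≤ ∑ s, ∑ a, d t s * π s a := by
      refine (Finset.abs_sum_le_sum_abs _ _).trans ?_
      refine Finset.sum_le_sum fun s _ => ?_
      refine (Finset.abs_sum_le_sum_abs _ _).trans ?_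
      refine Finset.sum_le_sum fun a _ => ?_
      rw [abs_mul, abs_of_nonneg (mul_nonneg (hd0 t s) (hpos s a))]
      calc d t s * π s a * |R s a| ≤ d t s * π s a * 1 :=
            mul_le_mul_of_nonneg_left (cyclicR_abs i s a) (mul_nonneg (hd0 t s) (hpos s a))
        _ = d t s * π s a := by ring
    calc |E t| ≤ ∑ s, ∑ a, d t s * π s a := habs
      _ = ∑ s, d t s := by
          refine Finset.sum_congr rfl fun s _ => ?_
          rw [← Finset.mul_sum, hsum s, mul_one]
      _ = 1 := hd1 t
  have hsumm : Summable (fun t => γ^t * E t) := by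
    apply Summable.of_abs
    apply Summable.of_nonneg_of_le (fun t => abs_nonneg _) (fun t => ?_)
      (summable_geometric_of_lt_one hγle h1)
    rw [abs_mul, abs_pow, abs_of_nonneg hγle]
    calc γ^t * |E t| ≤ γ^t * 1 := mul_le_mul_of_nonneg_left (hEb t) (pow_nonneg hγle t)
      _ = γ^t := mul_one _
  have htsum_le : ∑' t, γ^t * E t ≤ Φ 0 := by
    apply Summable.tsum_le_of_sum_range_le hsumm
    intro n
    have := hpartial n
    nlinarith [mul_nonneg (pow_nonneg hγle n) (hΦ0 n)]
  -- value equals the discounted reward series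
  have hdsumm : ∀ s, Summable (fun t => γ^t * d t s) := by
    intro s
    apply Summable.of_nonneg_of_le (fun t => mul_nonneg (pow_nonneg hγle t) (hd0 t s))
      (fun t => ?_) (summable_geometric_of_lt_one hγle h1)
    calc γ^t * d t s ≤ γ^t * 1 := mul_le_mul_of_nonneg_left (hdle t s) (pow_nonneg hγle t)
      _ = γ^t := mul_one _
  have hg : ∀ (s : Fin 3) (a : Fin 2 → Fin 2),
      Summable (fun t => (1-γ) * (γ^t * d t s * (π s a * R s a))) := by
    intro s a
    exact (((hdsumm s).mul_right _).mul_left _)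
  have hvalue : value (cyclicGame γ) i π = ∑' t, γ^t * E t := by
    have hcgγ : (cyclicGame γ).γ = γ := rfl
    unfold value saOcc occ
    simp only [hcgγ, ← hd, ← hR]
    have hsa : ∀ (s : Fin 3) (a : Fin 2 → Fin 2), ((1 - γ) * ∑' t, γ^t * d t s) * π s a * R s a
        = ∑' t, (1-γ) * (γ^t * d t s * (π s a * R s a)) := by
      intro s a
      calc ((1 - γ) * ∑' t, γ^t * d t s) * π s a * R s a
          = (1-γ) * ((∑' t, γ^t * d t s) * (π s a * R s a)) := by ring
        _ = (1-γ) * (∑' t, (γ^t * d t s) * (π s a * R s a)) := by rw [tsum_mul_right]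
        _ = ∑' t, (1-γ) * ((γ^t * d t s) * (π s a * R s a)) := by rw [tsum_mul_left]
    simp only [hsa]
    have hrow : ∀ s : Fin 3, (∑ a : Fin 2 → Fin 2, ∑' t, (1-γ) * (γ^t * d t s * (π s a * R s a)))
        = ∑' t, ∑ a : Fin 2 → Fin 2, (1-γ) * (γ^t * d t s * (π s a * R s a)) :=
      fun s => (Summable.tsum_finsetSum (fun a _ => hg s a)).symm
    rw [Finset.sum_congr rfl fun s _ => hrow s]
    rw [← Summable.tsum_finsetSum (fun s _ => summable_sum (fun a _ => hg s a))]
    have hper : ∀ t : ℕ, (∑ s : Fin 3, ∑ a : Fin 2 → Fin 2, (1-γ) * (γ^t * d t s * (π s a * R s a)))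
        = (1-γ) * (γ^t * E t) := by
      intro t
      rw [hE]
      simp only [Finset.mul_sum]
      refine Finset.sum_congr rfl fun s _ => Finset.sum_congr rfl fun a _ => ?_
      ring
    rw [tsum_congr hper, tsum_mul_left]
    rw [← mul_assoc, show (1/(1-γ)) * (1-γ) = 1 by field_simp, one_mul]
  rw [hvalue]
  calc ∑' t, γ^t * E t ≤ Φ 0 := htsum_le
    _ = ∑ s, (1:ℝ)/3 * V s := rfl
    _ = (1/3) * (V 0 + V 1 + V 2) := by rw [Fin.sum_univ_three]; ring
    _ = (2/3)/(1-γ) := by rw [hV, Vf_sum hγle h1]; field_simp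

end Aux3

section Aux4

variable {γ : ℝ}

lemma dev_expert_isPol (i : Fin 2) (πi' : Fin 3 → Fin 2 → ℝ) (hp : IsPol πi') (j : Fin 2) :
    IsPol (dev cyclicExpert i πi' j) := by
  unfold dev
  by_cases h : j = i
  · subst h; rw [Function.update_self]; exact hp
  · rw [Function.update_of_ne h]; exact expert_isPol j

lemma dev_learner_isPol (i : Fin 2) (πi' : Fin 3 → Fin 2 → ℝ) (hp : IsPol πi') (j : Fin 2) :
    IsPol (dev cyclicLearner i πi' j) := by
  unfold dev
  by_cases h : j = i
  · subst h; rw [Function.update_self]; exact hp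
  · rw [Function.update_of_ne h]; exact learner_isPol j

lemma joint_isPol (π : ∀ i : Fin 2, Fin 3 → Fin 2 → ℝ) (h : ∀ i, IsPol (π i)) :
    (∀ s a, 0 ≤ joint π s a) ∧ ∀ s, ∑ a : Fin 2 → Fin 2, joint π s a = 1 := by
  constructor
  · intro s a
    exact Finset.prod_nonneg fun i _ => (h i).1 s (a i)
  · intro s
    rw [sum_pi2]
    simp only [joint, Fin.prod_univ_two]
    have h0 := (h 0).2 s
    have h1 := (h 1).2 s
    rw [Fin.sum_univ_two] at h0 h1
    have : ∀ x y : Fin 2, (![x,y] : Fin 2 → Fin 2) 0 = x ∧ (![x,y] : Fin 2 → Fin 2) 1 = y :=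
      fun x y => ⟨rfl, rfl⟩
    calc π 0 s (![0,0] 0) * π 1 s (![0,0] 1) + π 0 s (![0,1] 0) * π 1 s (![0,1] 1) +
          π 0 s (![1,0] 0) * π 1 s (![1,0] 1) + π 0 s (![1,1] 0) * π 1 s (![1,1] 1)
        = (π 0 s 0 + π 0 s 1) * (π 1 s 0 + π 1 s 1) := by
          rw [(this 0 0).1, (this 0 0).2, (this 0 1).1, (this 0 1).2,
            (this 1 0).1, (this 1 0).2, (this 1 1).1, (this 1 1).2]
          ring
      _ = 1 := by rw [h0, h1]; norm_num

lemma PV_advance (s : Fin 3) :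
    ∑ s' : Fin 3, (cyclicGame γ).P s ![0,0] s' * Vf γ s' = Vf γ (s+1) := by
  have : ∀ s' : Fin 3, (cyclicGame γ).P s ![0,0] s' = if s' = s + 1 then 1 else 0 := by
    intro s'; simp [cyclicGame]
  rw [Finset.sum_congr rfl fun s' _ => by rw [this s']]
  exact sum_ind (s+1) (Vf γ)

lemma PV_stay (s : Fin 3) (a : Fin 2 → Fin 2) (ha : ¬(a 0 = 0 ∧ a 1 = 0)) :
    ∑ s' : Fin 3, (cyclicGame γ).P s a s' * Vf γ s' = Vf γ s := by
  have : ∀ s' : Fin 3, (cyclicGame γ).P s a s' = if s' = s then 1 else 0 := by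
    intro s'; simp only [cyclicGame]; rw [if_neg ha]
  rw [Finset.sum_congr rfl fun s' _ => by rw [this s']]
  exact sum_ind s (Vf γ)

lemma r_advance (i : Fin 2) (s : Fin 3) :
    (cyclicGame γ).r i s ![0,0] = (if s = 0 then (1:ℝ)/3 else if s = 1 then 2/3 else 1) := by
  simp [cyclicGame]

lemma r_stay (i : Fin 2) (s : Fin 3) (a : Fin 2 → Fin 2) (ha : ¬(a 0 = 0 ∧ a 1 = 0)) :
    (cyclicGame γ).r i s a = -1 := by
  simp only [cyclicGame]; rw [if_neg ha]

lemma bell_expert_dev (h0 : 0 < γ) (h1 : γ < 1) (i : Fin 2) (πi' : Fin 3 → Fin 2 → ℝ)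
    (hp : IsPol πi') (s : Fin 3) :
    ∑ a : Fin 2 → Fin 2, joint (dev cyclicExpert i πi') s a *
        ((cyclicGame γ).r i s a + γ * ∑ s', (cyclicGame γ).P s a s' * Vf γ s') ≤ Vf γ s := by
  have hγle := h0.le
  have hVpos := Vf_nonneg hγle h1 s
  have hp1 := hp.2 s
  rw [Fin.sum_univ_two] at hp1
  have hbel := Vf_bellman hγle h1 s
  rw [sum_pi2]
  have hna : ¬((![0,1] : Fin 2 → Fin 2) 0 = 0 ∧ (![0,1] : Fin 2 → Fin 2) 1 = 0) := by norm_num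
  have hnb : ¬((![1,0] : Fin 2 → Fin 2) 0 = 0 ∧ (![1,0] : Fin 2 → Fin 2) 1 = 0) := by norm_num
  have hnc : ¬((![1,1] : Fin 2 → Fin 2) 0 = 0 ∧ (![1,1] : Fin 2 → Fin 2) 1 = 0) := by norm_num
  rw [PV_advance, PV_stay s _ hna, PV_stay s _ hnb, PV_stay s _ hnc,
    r_advance i s, r_stay i s _ hna, r_stay i s _ hnb, r_stay i s _ hnc]
  have hcase : i = 0 ∨ i = 1 := by omega
  rcases hcase with hi | hi <;> subst hi
  · -- player 0 deviates: joint weights are πi' s (a 0) * [a 1 = 0]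
    have hj : ∀ x y : Fin 2, joint (dev cyclicExpert 0 πi') s ![x,y]
        = πi' s x * (if y = 0 then (1:ℝ) else 0) := by
      intro x y
      show (∏ j : Fin 2, dev cyclicExpert 0 πi' j s (![x,y] j)) = _
      rw [Fin.prod_univ_two]
      unfold dev
      rw [Function.update_self, Function.update_of_ne (by decide)]
      rfl
    rw [hj 0 0, hj 0 1, hj 1 0, hj 1 1]
    rw [if_pos rfl, if_neg (show (1:Fin 2) ≠ 0 by decide)]
    rw [hbel]
    nlinarith [hp.1 s 0, hp.1 s 1, mul_nonneg (hp.1 s 1) (mul_nonneg (sub_nonneg.2 h1.le) hVpos)]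
  · -- player 1 deviates
    have hj : ∀ x y : Fin 2, joint (dev cyclicExpert 1 πi') s ![x,y]
        = (if x = 0 then (1:ℝ) else 0) * πi' s y := by
      intro x y
      show (∏ j : Fin 2, dev cyclicExpert 1 πi' j s (![x,y] j)) = _
      rw [Fin.prod_univ_two]
      unfold dev
      rw [Function.update_self, Function.update_of_ne (by decide)]
      rfl
    rw [hj 0 0, hj 0 1, hj 1 0, hj 1 1]
    rw [if_pos rfl, if_neg (show (1:Fin 2) ≠ 0 by decide)]
    rw [hbel]
    nlinarith [hp.1 s 0, hp.1 s 1, mul_nonneg (hp.1 s 1) (mul_nonneg (sub_nonneg.2 h1.le) hVpos)]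

end Aux4

/-- in the 3-state cyclic game, the expert `π^E` is a full-support
Nash equilibrium, the learner `π` matches its state-only occupancy measure
exactly, yet `V₂^{π^E} − V₂^π = (5/3)/(1-γ)` and `NashGap(π) ≥ (5/3)/(1-γ)`. -/
theorem state_matching_insufficient (γ : ℝ) (hγ0 : 0 < γ) (hγ1 : γ < 1) :
    (∀ s, 0 < occ (cyclicGame γ) (joint cyclicExpert) s) ∧
    (∀ (i : Fin 2) (πi' : Fin 3 → Fin 2 → ℝ), IsPol πi' →
      value (cyclicGame γ) i (joint (dev cyclicExpert i πi')) ≤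
        value (cyclicGame γ) i (joint cyclicExpert)) ∧
    (∀ s, occ (cyclicGame γ) (joint cyclicLearner) s =
      occ (cyclicGame γ) (joint cyclicExpert) s) ∧
    value (cyclicGame γ) 1 (joint cyclicExpert) -
        value (cyclicGame γ) 1 (joint cyclicLearner) = (5 / 3) / (1 - γ) ∧
    (∃ (i : Fin 2) (πi' : Fin 3 → Fin 2 → ℝ), IsPol πi' ∧
      (5 / 3) / (1 - γ) ≤
        value (cyclicGame γ) i (joint (dev cyclicLearner i πi')) -
          value (cyclicGame γ) i (joint cyclicLearner)) := by
  have hγle := hγ0.le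
  have hne : (1:ℝ) - γ ≠ 0 := by nlinarith
  refine ⟨?_, ?_, ?_, ?_, ?_⟩
  · intro s; rw [occ_expert hγle hγ1]; norm_num
  · intro i πi' hp
    rw [value_expert hγle hγ1 i]
    exact value_le_of_bellman hγ0 hγ1 i _
      (joint_isPol _ (dev_expert_isPol i πi' hp)).1
      (joint_isPol _ (dev_expert_isPol i πi' hp)).2
      (bell_expert_dev hγ0 hγ1 i πi' hp)
  · intro s; rw [occ_learner hγle hγ1, occ_expert hγle hγ1]
  · rw [value_expert hγle hγ1 1, value_learner hγle hγ1 1]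
    field_simp
    ring
  · refine ⟨1, fun _ a => if a = 0 then 1 else 0, expert_isPol 1, ?_⟩
    have hjoint : joint (dev cyclicLearner 1 (fun _ a => if a = 0 then 1 else 0))
        = joint cyclicExpert := by
      funext s a
      unfold joint
      refine Finset.prod_congr rfl fun j _ => ?_
      have hc : j = 0 ∨ j = 1 := by omega
      rcases hc with h | h <;> subst h
      · show dev cyclicLearner 1 _ 0 s (a 0) = cyclicExpert 0 s (a 0)
        unfold dev
        rw [Function.update_of_ne (by decide)]
        simp [cyclicLearner, cyclicExpert]
      · show dev cyclicLearner 1 _ 1 s (a 1) = cyclicExpert 1 s (a 1)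
        unfold dev
        rw [Function.update_self]
        rfl
    rw [hjoint, value_expert hγle hγ1 1, value_learner hγle hγ1 1]
    have heq : (2/3)/(1-γ) - (-1/(1-γ)) = (5/3)/(1-γ) := by field_simp; ring
    rw [heq]

end MAIL
end

section
/- In the 3-state cyclic game, when the other player plays constantly a₁, the advantage of any deviating action a₂ at any state is nonpositive: for the equilibrium π^E and any state s, A_i^{π^E}(a₂, s) = Q_i^{π^E}(s, (a₂, a₁)) − V_i^{π^E}(s) satisfies A_i^{π^E}(a₂, s) ≤ γ · A_i^{π^E}(a₂, s), hence A_i^{π^E}(a₂, s) ≤ 0. -/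
open scoped BigOperators

namespace MAIL

/-! Deviating from `a₁` makes the state self-loop with reward `-1`, so
`Q(s, a₂) = -1 + γ V(s)` and the advantage is `-1 - (1 - γ) V(s)`. The expert only collects
the nonnegative rewards of the cycle, so `V(s) ≥ 0` and the advantage is at most `-1`. -/

section MarkovGame

variable {n : ℕ} {S : Type} {A : Fin n → Type} [Fintype S] [∀ i, Fintype (A i)]

theorem stateDist_nonneg {G : Game n S A} {π : S → (∀ i, A i) → ℝ}
    (hν : ∀ s, 0 ≤ G.ν₀ s) (hπ : ∀ s a, 0 ≤ π s a) (hP : ∀ s a s', 0 ≤ G.P s a s') :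
    ∀ t s, 0 ≤ stateDist G π t s
  | 0, s => hν s
  | t + 1, s' => Finset.sum_nonneg fun s _ => Finset.sum_nonneg fun a _ =>
      mul_nonneg (mul_nonneg (stateDist_nonneg hν hπ hP t s) (hπ s a)) (hP s a s')

theorem occ_nonneg {G : Game n S A} {π : S → (∀ i, A i) → ℝ} (hγ0 : 0 ≤ G.γ) (hγ1 : G.γ ≤ 1)
    (hd : ∀ t s, 0 ≤ stateDist G π t s) (s : S) : 0 ≤ occ G π s :=
  mul_nonneg (sub_nonneg.2 hγ1) (tsum_nonneg fun t => mul_nonneg (pow_nonneg hγ0 t) (hd t s))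

theorem value_nonneg {G : Game n S A} {i : Fin n} {π : S → (∀ i, A i) → ℝ}
    (hγ0 : 0 ≤ G.γ) (hγ1 : G.γ ≤ 1) (hd : ∀ t s, 0 ≤ stateDist G π t s)
    (hr : ∀ s a, 0 ≤ π s a * G.r i s a) : 0 ≤ value G i π := by
  refine mul_nonneg (one_div_nonneg.2 (sub_nonneg.2 hγ1)) <|
    Finset.sum_nonneg fun s _ => Finset.sum_nonneg fun a _ => ?_
  rw [saOcc, mul_assoc]
  exact mul_nonneg (occ_nonneg hγ0 hγ1 hd s) (hr s a)

theorem valueFrom_nonneg [DecidableEq S] {G : Game n S A} {i : Fin n}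
    {π : S → (∀ i, A i) → ℝ} (hγ0 : 0 ≤ G.γ) (hγ1 : G.γ ≤ 1) (hπ : ∀ s a, 0 ≤ π s a)
    (hP : ∀ s a s', 0 ≤ G.P s a s') (hr : ∀ s a, 0 ≤ π s a * G.r i s a) (s₀ : S) :
    0 ≤ valueFrom G i π s₀ := by
  have hν : ∀ s, 0 ≤ (if s = s₀ then 1 else 0 : ℝ) := fun s => by split_ifs <;> norm_num
  exact value_nonneg hγ0 hγ1 (stateDist_nonneg hν hπ hP) hr

theorem Qf_eq_of_selfLoop [DecidableEq S] (G : Game n S A) (i : Fin n) (π : S → (∀ i, A i) → ℝ)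
    {s : S} {a : ∀ i, A i} (hloop : ∀ s', G.P s a s' = if s' = s then 1 else 0) :
    Qf G i π s a = G.r i s a + G.γ * valueFrom G i π s := by
  simp only [Qf, hloop, ite_mul, one_mul, zero_mul, Finset.sum_ite_eq', Finset.mem_univ, if_true]

end MarkovGame

theorem cyclicGame_P_nonneg (γ : ℝ) (s : Fin 3) (a : ∀ _ : Fin 2, Fin 2) (s' : Fin 3) :
    0 ≤ (cyclicGame γ).P s a s' := by
  simp only [cyclicGame]
  split_ifs <;> norm_num

theorem joint_cyclicExpert_nonneg (s : Fin 3) (a : ∀ _ : Fin 2, Fin 2) :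
    0 ≤ joint cyclicExpert s a :=
  Finset.prod_nonneg fun j _ => by simp only [cyclicExpert]; split_ifs <;> norm_num

theorem joint_cyclicExpert_mul_reward_nonneg (γ : ℝ) (i : Fin 2) (s : Fin 3)
    (a : ∀ _ : Fin 2, Fin 2) : 0 ≤ joint cyclicExpert s a * (cyclicGame γ).r i s a := by
  simp only [joint, cyclicExpert, cyclicGame, Fin.prod_univ_two]
  split_ifs <;> first | tauto | norm_num

theorem valueFrom_cyclicExpert_nonneg {γ : ℝ} (hγ0 : 0 ≤ γ) (hγ1 : γ ≤ 1) (i : Fin 2)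
    (s : Fin 3) : 0 ≤ valueFrom (cyclicGame γ) i (joint cyclicExpert) s :=
  valueFrom_nonneg hγ0 hγ1 joint_cyclicExpert_nonneg (cyclicGame_P_nonneg γ)
    (joint_cyclicExpert_mul_reward_nonneg γ i) s

theorem Qf_cyclicGame_deviation (γ : ℝ) (i : Fin 2) (s : Fin 3) :
    Qf (cyclicGame γ) i (joint cyclicExpert) s (fun j => if j = i then (1 : Fin 2) else 0) =
      -1 + γ * valueFrom (cyclicGame γ) i (joint cyclicExpert) s := by
  have hdev : ¬((if (0 : Fin 2) = i then (1 : Fin 2) else 0) = 0 ∧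
      (if (1 : Fin 2) = i then (1 : Fin 2) else 0) = 0) := by
    fin_cases i <;> decide
  rw [Qf_eq_of_selfLoop _ _ _ fun s' => by simp only [cyclicGame]; rw [if_neg hdev]]
  simp only [cyclicGame]
  rw [if_neg hdev]

/-- in the 3-state cyclic game, when the other player plays `a₁`
constantly, the advantage of the deviating action `a₂` for player `i` at any
state `s` satisfies `A ≤ γ A`, hence `A ≤ 0`. -/
theorem cyclic_deviation_advantage_nonpos (γ : ℝ) (hγ0 : 0 < γ) (hγ1 : γ < 1)
    (i : Fin 2) (s : Fin 3) :
    Qf (cyclicGame γ) i (joint cyclicExpert) s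
        (fun j => if j = i then (1 : Fin 2) else 0) -
      valueFrom (cyclicGame γ) i (joint cyclicExpert) s ≤
    γ * (Qf (cyclicGame γ) i (joint cyclicExpert) s
        (fun j => if j = i then (1 : Fin 2) else 0) -
      valueFrom (cyclicGame γ) i (joint cyclicExpert) s) ∧
    Qf (cyclicGame γ) i (joint cyclicExpert) s
        (fun j => if j = i then (1 : Fin 2) else 0) -
      valueFrom (cyclicGame γ) i (joint cyclicExpert) s ≤ 0 := by
  rw [Qf_cyclicGame_deviation]
  set V := valueFrom (cyclicGame γ) i (joint cyclicExpert) s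
  have hV : 0 ≤ V := valueFrom_cyclicExpert_nonneg hγ0.le hγ1.le i s
  have hA : -1 + γ * V - V ≤ 0 := by nlinarith [mul_nonneg (sub_nonneg.2 hγ1.le) hV]
  exact ⟨by nlinarith, hA⟩

end MAIL
end

section
/- Performance Difference Lemma for Markov Games (infinite horizon): for any two joint policies π, π' and any player i, V_i^{π'_i, π_{−i}}(ν₀) − V_i^{π_i, π_{−i}}(ν₀) = (1/(1−γ)) E_{(s,a) ∼ ρ_{(π'_i, π_{−i})}}[ Q_i^π(s,a) − V_i^π(s) ], where Q_i^π(s,a) = r_i(s,a) + γ ∑_{s'} P(s'|s,a) V_i^π(s'). -/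
open scoped BigOperators

/-!
The occupancy measure `ρ` of a policy `μ` satisfies the flow equation
`ρ(s') = (1-γ) ν₀(s') + γ ∑ₛ ∑ₐ ρ(s) μ(a|s) P(s'|s,a)`, obtained by shifting the time index in
its defining series. Tested against a function `V` on states, it gives
`E_{(s,a)∼ρ}[γ ∑_{s'} P(s'|s,a) V(s') - V(s)] = -(1-γ) E_{ν₀}[V]`.
For the occupancy measure of the deviating policy and `V = V_i^π`, writing
`Q - V = r + (γ P V - V)` turns the right-hand side into `V_i^{π'}(ν₀) - E_{ν₀}[V_i^π]`, and
`E_{ν₀}[V_i^π] = V_i^π(ν₀)` because the state distributions, hence the occupancy measure and the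
value, are linear in the initial distribution.
-/

namespace MAIL

section

variable {n : ℕ} {S : Type} {A : Fin n → Type} [∀ i, Fintype (A i)]

theorem isPol_joint {π : ∀ i, S → A i → ℝ} (hπ : ∀ i, IsPol (π i)) : IsPol (joint π) := by
  refine ⟨fun s a => Finset.prod_nonneg fun j _ => (hπ j).1 s (a j), fun s => ?_⟩
  simp only [joint, ← Fintype.prod_sum]
  exact Finset.prod_eq_one fun j _ => (hπ j).2 s

theorem isPol_dev {π : ∀ i, S → A i → ℝ} (hπ : ∀ i, IsPol (π i)) {i : Fin n}
    {πi' : S → A i → ℝ} (hπi' : IsPol πi') (j : Fin n) : IsPol (dev π i πi' j) := by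
  rcases eq_or_ne j i with rfl | hj
  · simpa [dev] using hπi'
  · simpa [dev, Function.update_of_ne hj] using hπ j

variable [Fintype S]

section Occupancy

variable {G : Game n S A} {μ : S → (∀ i, A i) → ℝ}

theorem stateDist_nonneg_s8 (hG : IsGame G) (hμ : IsPol μ) (t : ℕ) (s : S) :
    0 ≤ stateDist G μ t s := by
  obtain ⟨-, -, hν₀, -, hP, -⟩ := hG
  induction t generalizing s with
  | zero => exact hν₀ s
  | succ t ih =>
    exact Finset.sum_nonneg fun s₁ _ => Finset.sum_nonneg fun a _ =>
      mul_nonneg (mul_nonneg (ih s₁) (hμ.1 s₁ a)) ((hP s₁ a).1 s)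

theorem sum_stateDist (hG : IsGame G) (hμ : IsPol μ) (t : ℕ) :
    ∑ s, stateDist G μ t s = 1 := by
  obtain ⟨-, -, -, hν₀, hP, -⟩ := hG
  induction t with
  | zero => exact hν₀
  | succ t ih =>
    have hmass : ∀ s, ∑ s', ∑ a, stateDist G μ t s * μ s a * G.P s a s' = stateDist G μ t s := by
      intro s
      rw [Finset.sum_comm]
      simp only [← Finset.mul_sum, (hP s _).2, hμ.2 s, mul_one]
    simp only [stateDist]
    rw [Finset.sum_comm]
    simp only [hmass, ih]

theorem stateDist_le_one (hG : IsGame G) (hμ : IsPol μ) (t : ℕ) (s : S) :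
    stateDist G μ t s ≤ 1 :=
  sum_stateDist hG hμ t ▸
    Finset.single_le_sum (fun s' _ => stateDist_nonneg_s8 hG hμ t s') (Finset.mem_univ s)

theorem summable_discounted_stateDist (hG : IsGame G) (hμ : IsPol μ) (s : S) :
    Summable fun t => G.γ ^ t * stateDist G μ t s :=
  (summable_geometric_of_lt_one hG.1 hG.2.1).of_nonneg_of_le
    (fun t => mul_nonneg (pow_nonneg hG.1 t) (stateDist_nonneg_s8 hG hμ t s))
    (fun t => mul_le_of_le_one_right (pow_nonneg hG.1 t) (stateDist_le_one hG hμ t s))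

theorem occ_eq_init_add_flow (hG : IsGame G) (hμ : IsPol μ) (s' : S) :
    occ G μ s' = (1 - G.γ) * G.ν₀ s' + G.γ * ∑ s, ∑ a, occ G μ s * μ s a * G.P s a s' := by
  have hsum := summable_discounted_stateDist hG hμ
  have hstep : ∀ t, G.γ ^ (t + 1) * stateDist G μ (t + 1) s'
      = ∑ s, ∑ a, G.γ * μ s a * G.P s a s' * (G.γ ^ t * stateDist G μ t s) := by
    intro t
    rw [stateDist, Finset.mul_sum]
    refine Finset.sum_congr rfl fun s _ => ?_
    rw [Finset.mul_sum]
    exact Finset.sum_congr rfl fun a _ => by ring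
  have hshift : ∑' t, G.γ ^ (t + 1) * stateDist G μ (t + 1) s'
      = ∑ s, ∑ a, G.γ * μ s a * G.P s a s' * ∑' t, G.γ ^ t * stateDist G μ t s := by
    rw [tsum_congr hstep,
      Summable.tsum_finsetSum fun s _ => summable_sum fun a _ => (hsum s).mul_left _]
    refine Finset.sum_congr rfl fun s _ => ?_
    rw [Summable.tsum_finsetSum fun a _ => (hsum s).mul_left _]
    exact Finset.sum_congr rfl fun a _ => tsum_mul_left
  rw [occ, (hsum s').tsum_eq_zero_add, hshift]
  simp only [occ, stateDist, pow_zero, one_mul, mul_add, Finset.mul_sum]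
  congr 1
  exact Finset.sum_congr rfl fun s _ => Finset.sum_congr rfl fun a _ => by ring

theorem sum_saOcc_mul_discounted_next_sub (hG : IsGame G) (hμ : IsPol μ) (V : S → ℝ) :
    ∑ s, ∑ a, saOcc G μ s a * (G.γ * ∑ s', G.P s a s' * V s' - V s)
      = -((1 - G.γ) * ∑ s, G.ν₀ s * V s) := by
  have hflow : ∀ s', occ G μ s' - (1 - G.γ) * G.ν₀ s'
      = G.γ * ∑ s, ∑ a, occ G μ s * μ s a * G.P s a s' := fun s' => by
    linarith [occ_eq_init_add_flow hG hμ s']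
  have hnext : ∑ s, ∑ a, saOcc G μ s a * (G.γ * ∑ s', G.P s a s' * V s')
      = ∑ s', (occ G μ s' - (1 - G.γ) * G.ν₀ s') * V s' := by
    simp only [hflow, saOcc, Finset.mul_sum, Finset.sum_mul]
    symm
    rw [Finset.sum_comm]
    refine Finset.sum_congr rfl fun s _ => ?_
    rw [Finset.sum_comm]
    exact Finset.sum_congr rfl fun a _ => Finset.sum_congr rfl fun s' _ => by ring
  have hstay : ∑ s, ∑ a, saOcc G μ s a * V s = ∑ s, occ G μ s * V s := by
    refine Finset.sum_congr rfl fun s _ => ?_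
    simp only [saOcc, ← Finset.sum_mul, ← Finset.mul_sum, hμ.2 s, mul_one]
  simp only [mul_sub, Finset.sum_sub_distrib]
  rw [hnext, hstay]
  simp only [sub_mul, Finset.sum_sub_distrib, Finset.mul_sum, mul_assoc]
  ring

end Occupancy

section Restart

variable [DecidableEq S]

@[simps]
def Game.atState (G : Game n S A) (s₀ : S) : Game n S A :=
  { G with ν₀ := fun s => if s = s₀ then 1 else 0 }

variable {G : Game n S A} {μ : S → (∀ i, A i) → ℝ}

theorem IsGame.atState (hG : IsGame G) (s₀ : S) : IsGame (G.atState s₀) := by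
  obtain ⟨hγ₀, hγ₁, -, -, hP, hr⟩ := hG
  refine ⟨hγ₀, hγ₁, fun s => ?_, ?_, hP, hr⟩
  · simp only [Game.atState_ν₀]
    split_ifs <;> norm_num
  · simp

theorem stateDist_eq_sum_atState (t : ℕ) (s : S) :
    stateDist G μ t s = ∑ s₀, G.ν₀ s₀ * stateDist (G.atState s₀) μ t s := by
  induction t generalizing s with
  | zero => simp [stateDist]
  | succ t ih =>
    simp only [stateDist, ih, Game.atState_P, Finset.sum_mul, Finset.mul_sum]
    symm
    rw [Finset.sum_comm]
    refine Finset.sum_congr rfl fun s₁ _ => ?_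
    rw [Finset.sum_comm]
    exact Finset.sum_congr rfl fun a _ => Finset.sum_congr rfl fun s₀ _ => by ring

theorem occ_eq_sum_atState (hG : IsGame G) (hμ : IsPol μ) (s : S) :
    occ G μ s = ∑ s₀, G.ν₀ s₀ * occ (G.atState s₀) μ s := by
  have hsplit : ∀ t, G.γ ^ t * stateDist G μ t s
      = ∑ s₀, G.ν₀ s₀ * (G.γ ^ t * stateDist (G.atState s₀) μ t s) := fun t => by
    rw [stateDist_eq_sum_atState, Finset.mul_sum]
    exact Finset.sum_congr rfl fun s₀ _ => by ring
  have hsum : ∀ s₀, Summable fun t => G.γ ^ t * stateDist (G.atState s₀) μ t s :=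
    fun s₀ => summable_discounted_stateDist (hG.atState s₀) hμ s
  rw [occ, tsum_congr hsplit, Summable.tsum_finsetSum fun s₀ _ => (hsum s₀).mul_left _,
    Finset.mul_sum]
  refine Finset.sum_congr rfl fun s₀ _ => ?_
  rw [tsum_mul_left, occ, Game.atState_γ]
  ring

theorem value_eq_sum_valueFrom (hG : IsGame G) (hμ : IsPol μ) (i : Fin n) :
    value G i μ = ∑ s₀, G.ν₀ s₀ * valueFrom G i μ s₀ := by
  have hrestart : ∀ s₀, valueFrom G i μ s₀ = value (G.atState s₀) i μ := fun _ => rfl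
  simp only [hrestart, value, saOcc, occ_eq_sum_atState hG hμ, Game.atState_γ, Game.atState_r,
    Finset.sum_mul, Finset.mul_sum]
  symm
  rw [Finset.sum_comm]
  refine Finset.sum_congr rfl fun s _ => ?_
  rw [Finset.sum_comm]
  exact Finset.sum_congr rfl fun a _ => Finset.sum_congr rfl fun s₀ _ => by ring

end Restart

end

/-- Performance Difference Lemma for infinite-horizon Markov Games:
`V_i^{π'_i,π_{-i}}(ν₀) − V_i^{π}(ν₀)
  = (1/(1-γ)) E_{(s,a) ∼ ρ_{(π'_i,π_{-i})}} [Q_i^π(s,a) − V_i^π(s)]`. -/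
theorem performance_difference {n : ℕ} {S : Type} {A : Fin n → Type}
    [Fintype S] [∀ i, Fintype (A i)] [DecidableEq S]
    (G : Game n S A) (hG : IsGame G)
    (π : ∀ i, S → A i → ℝ) (hπ : ∀ i, IsPol (π i))
    (i : Fin n) (πi' : S → A i → ℝ) (hπi' : IsPol πi') :
    value G i (joint (dev π i πi')) - value G i (joint π) =
      (1 / (1 - G.γ)) * ∑ s : S, ∑ a : (∀ j, A j),
        saOcc G (joint (dev π i πi')) s a *
          (Qf G i (joint π) s a - valueFrom G i (joint π) s) := by
  have hdev : IsPol (joint (dev π i πi')) := isPol_joint (isPol_dev hπ hπi')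
  have hγ : 1 - G.γ ≠ 0 := (sub_pos.2 hG.2.1).ne'
  have hsplit : ∀ s a, Qf G i (joint π) s a - valueFrom G i (joint π) s
      = G.r i s a + (G.γ * ∑ s', G.P s a s' * valueFrom G i (joint π) s'
          - valueFrom G i (joint π) s) := fun s a => by
    rw [Qf]
    ring
  simp only [hsplit, mul_add, Finset.sum_add_distrib,
    sum_saOcc_mul_discounted_next_sub hG hdev]
  rw [value_eq_sum_valueFrom hG (isPol_joint hπ), value]
  field_simp
  ring

end MAIL
end
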